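/- arXiv:1612.06526 — 4 statements merged into one kernel-verified Lean document; each statement's English description precedes it below -/
import Mathlib

section
/- For all natural numbers x, y, z: x + y = z if and only if either x = y = z = 0, or z ≠ 0 and (z·x + 1)·(z·y + 1) = z·z·(x·y + 1) + 1. -/
theorem stmt1 : ∀ x y z : ℕ,
    x + y = z ↔
      (x = 0 ∧ y = 0 ∧ z = 0) ∨
      (z ≠ 0 ∧ (z * x + 1) * (z * y + 1) = z * z * (x * y + 1) + 1) := by
  intro x y z
  constructor
  · rintro rfl
    rcases Nat.eq_zero_or_pos (x + y) with h | h
    · left; omega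
    · right
      constructor
      · omega
      · ring
  · rintro (⟨rfl, rfl, rfl⟩ | ⟨hz, h⟩)
    · rfl
    · nlinarith [Nat.pos_of_ne_zero hz, h]
end

section
/- For all integers x, y, z: x + y = z if and only if either (z = 0 and (x+1)·(y+1) = x·y + 1), or (z ≠ 0 and (z·x + 1)·(z·y + 1) = z·z·(x·y + 1) + 1). -/
theorem stmt2 : ∀ x y z : ℤ,
    x + y = z ↔
      (z = 0 ∧ (x + 1) * (y + 1) = x * y + 1) ∨
      (z ≠ 0 ∧ (z * x + 1) * (z * y + 1) = z * z * (x * y + 1) + 1) := by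
  intro x y z
  constructor
  · intro h
    by_cases hz : z = 0
    · left; exact ⟨hz, by nlinarith⟩
    · right; exact ⟨hz, by rw [← h]; ring⟩
  · rintro (⟨h1, h2⟩ | ⟨h1, h2⟩)
    · subst h1; nlinarith
    · have : z * (x + y - z) = 0 := by nlinarith
      rcases mul_eq_zero.1 this with h | h
      · exact absurd h h1
      · linarith
end

section
/- Let n₁, ..., n_k be positive integers with lcm N, t₁, ..., t_k positive rationals, and suppose there exist integers c_m with Σ c_m(N/n_m) = 1; set ν_m = c_m·N/n_m and t = Π_m t_m^{-ν_m}. If a positive rational x satisfies: for each m, t_m·x is an n_m-th power of a rational, then x = γ^N · t for some positive rational γ. -/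
lemma zpow_sum_aux {ι : Type*} (x : ℚ) (hx : x ≠ 0) (s : Finset ι) (f : ι → ℤ) :
    x ^ (∑ i ∈ s, f i) = ∏ i ∈ s, x ^ f i := by
  classical
  induction s using Finset.cons_induction with
  | empty => simp
  | cons a s ha ih => rw [Finset.sum_cons, Finset.prod_cons, zpow_add₀ hx, ih]

theorem stmt14 : ∀ (k : ℕ) (n : Fin k → ℕ), (∀ m, 0 < n m) →
    ∀ N : ℕ, N = Finset.univ.lcm n →
    ∀ c : Fin k → ℤ, (∑ m, c m * ((N / n m : ℕ) : ℤ)) = 1 →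
    ∀ t : Fin k → ℚ, (∀ m, 0 < t m) →
    ∀ x : ℚ, 0 < x →
    (∀ m, ∃ y : ℚ, t m * x = y ^ (n m)) →
    ∃ γ : ℚ, 0 < γ ∧ x = γ ^ N * ∏ m, (t m) ^ (-(c m * ((N / n m : ℕ) : ℤ))) := by
  intro k n hn N hN c hc t ht x hx hpow
  choose y hy using hpow
  set ν : Fin k → ℤ := fun m => c m * ((N / n m : ℕ) : ℤ) with hνdef
  have hNdvd : ∀ m, n m ∣ N := fun m => hN ▸ Finset.dvd_lcm (Finset.mem_univ m)
  have hty : ∀ m, 0 < t m * x := fun m => mul_pos (ht m) hx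
  have hyabs : ∀ m, |y m| ^ (n m) = t m * x := by
    intro m
    rw [← abs_pow, ← hy m, abs_of_pos (hty m)]
  have hy0 : ∀ m, 0 < |y m| := by
    intro m
    rcases lt_or_eq_of_le (abs_nonneg (y m)) with h | h
    · exact h
    · exfalso
      have := hyabs m
      rw [← h, zero_pow (hn m).ne'] at this
      exact absurd this.symm (hty m).ne'
  refine ⟨∏ m, |y m| ^ (c m), Finset.prod_pos (fun m _ => zpow_pos (hy0 m) _), ?_⟩
  have key : (∏ m, |y m| ^ (c m)) ^ N = x * ∏ m, (t m) ^ (ν m) := by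
    rw [← Finset.prod_pow]
    have step : ∀ m ∈ Finset.univ, (|y m| ^ (c m)) ^ N = (t m) ^ (ν m) * x ^ (ν m) := by
      intro m _
      have h1 : (N : ℤ) = (n m : ℤ) * ((N / n m : ℕ) : ℤ) := by
        exact_mod_cast (Nat.mul_div_cancel' (hNdvd m)).symm
      calc (|y m| ^ (c m)) ^ N = |y m| ^ (c m * N) := by
              rw [← zpow_natCast (|y m| ^ (c m)) N, ← zpow_mul]
        _ = (|y m| ^ (n m : ℤ)) ^ (ν m) := by
              rw [← zpow_mul]; congr 1; rw [h1, hνdef]; ring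
        _ = (t m * x) ^ (ν m) := by rw [zpow_natCast, hyabs m]
        _ = (t m) ^ (ν m) * x ^ (ν m) := mul_zpow _ _ _
    rw [Finset.prod_congr rfl step, Finset.prod_mul_distrib,
      ← zpow_sum_aux x hx.ne' Finset.univ ν, hc, zpow_one, mul_comm]
  have hP : (∏ m, (t m) ^ (ν m)) ≠ 0 :=
    (Finset.prod_pos (fun m _ => zpow_pos (ht m) _)).ne'
  have hneg : (∏ m, (t m) ^ (-(ν m))) = (∏ m, (t m) ^ (ν m))⁻¹ := by
    rw [← Finset.prod_inv_distrib]
    exact Finset.prod_congr rfl fun m _ => zpow_neg _ _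
  rw [key, hneg, mul_assoc, mul_inv_cancel₀ hP, mul_one]
end

section
/- Let t₁, ..., t_k be positive rationals and n₁, ..., n_k positive integers. There exists a positive rational x such that t_m·x is an n_m-th power of a rational for all m, if and only if for all κ ≠ λ, t_κ·t_λ^{-1} is a gcd(n_κ, n_λ)-th power of a rational. -/
/-!
Necessity: `t κ / t λ = (t κ x) / (t λ x)` is a quotient of an `n κ`-th and an `n λ`-th power,
hence a `gcd (n κ) (n λ)`-th power.

Sufficiency, by induction on the set of indices: given `x` that works for a set `s`, put
`q = t j x` for a new index `j`. Since `q = (t j / t i) (t i x)`, it is a `gcd (n j) (n i)`-th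
power for every `i ∈ s`; powers of a positive element combine under `lcm`, so `q` is a
`gcd (n j) L`-th power with `L = lcm_{i ∈ s} n i`. By Bézout, `q r ^ L` is then an `n j`-th
power for a suitable `r > 0`, and `x r ^ L` works for `s ∪ {j}`.
-/

theorem Nat.gcd_finset_lcm_dvd {ι : Type*} {s : Finset ι} {f : ι → ℕ} {a : ℕ} (ha : a ≠ 0)
    (hf : ∀ i ∈ s, f i ≠ 0) : Nat.gcd a (s.lcm f) ∣ s.lcm fun i => Nat.gcd a (f i) := by
  have hL : s.lcm f ≠ 0 := Finset.lcm_eq_zero_iff.not.2 fun ⟨i, hi, h0⟩ => hf i hi h0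
  have hG : (s.lcm fun i => Nat.gcd a (f i)) ≠ 0 :=
    Finset.lcm_eq_zero_iff.not.2 fun ⟨_, _, h0⟩ => ha (Nat.eq_zero_of_gcd_eq_zero_left h0)
  rw [← Nat.factorization_le_iff_dvd (Nat.gcd_ne_zero_left ha) hG]
  intro p
  rw [Nat.factorization_gcd ha hL, Finsupp.inf_apply, Finset.factorization_lcm hf,
    Finset.factorization_lcm fun _ _ => Nat.gcd_ne_zero_left ha, Finset.sup_inf_distrib_left]
  refine Finset.sup_mono_fun fun i hi => ?_
  rw [Nat.factorization_gcd ha (hf i hi), Finsupp.inf_apply]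

theorem exists_pow_of_dvd {M : Type*} [Monoid M] {q : M} {d n : ℕ} (hd : d ∣ n)
    (h : ∃ y, q = y ^ n) : ∃ y, q = y ^ d := by
  obtain ⟨y, rfl⟩ := h
  obtain ⟨e, rfl⟩ := hd
  exact ⟨y ^ e, by rw [← pow_mul, mul_comm]⟩

theorem div_eq_pow_gcd_of_mul_eq_pow {K : Type*} [Field K] {s t x y z : K} {a b : ℕ} (hx : x ≠ 0)
    (hs : s * x = y ^ a) (ht : t * x = z ^ b) : ∃ w, s / t = w ^ Nat.gcd a b := by
  refine ⟨y ^ (a / Nat.gcd a b) / z ^ (b / Nat.gcd a b), ?_⟩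
  rw [← mul_div_mul_right s t hx, hs, ht, div_pow, ← pow_mul, ← pow_mul,
    Nat.div_mul_cancel (Nat.gcd_dvd_left a b), Nat.div_mul_cancel (Nat.gcd_dvd_right a b)]

section LinearOrderedField

open Finset

variable {K : Type*} [Field K] [LinearOrder K] [IsStrictOrderedRing K]

theorem exists_pos_pow_eq_of_pos {q : K} (hq : 0 < q) {n : ℕ} (h : ∃ y, q = y ^ n) :
    ∃ y, 0 < y ∧ q = y ^ n := by
  obtain ⟨y, rfl⟩ := h
  rcases Nat.eq_zero_or_pos n with rfl | hn
  · exact ⟨1, one_pos, by simp⟩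
  · refine ⟨|y|, abs_pos.2 fun hy => ?_, by rw [pow_abs, abs_of_pos hq]⟩
    simp [hy, hn.ne'] at hq

theorem exists_pow_lcm {q : K} (hq : 0 < q) {a b : ℕ} (ha : ∃ y, q = y ^ a)
    (hb : ∃ z, q = z ^ b) : ∃ w, q = w ^ Nat.lcm a b := by
  obtain ⟨y, hy0, hy⟩ := exists_pos_pow_eq_of_pos hq ha
  obtain ⟨z, hz0, hz⟩ := exists_pos_pow_eq_of_pos hq hb
  rcases Nat.eq_zero_or_pos (Nat.gcd a b) with hg | hg
  · obtain ⟨rfl, rfl⟩ := Nat.gcd_eq_zero_iff.1 hg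
    exact ⟨y, by simpa using hy⟩
  have hyz : y ^ (a / Nat.gcd a b) = z ^ (b / Nat.gcd a b) := by
    refine (pow_left_inj₀ (by positivity) (by positivity) hg.ne').1 ?_
    rw [← pow_mul, ← pow_mul, Nat.div_mul_cancel (Nat.gcd_dvd_left a b),
      Nat.div_mul_cancel (Nat.gcd_dvd_right a b), ← hy, ← hz]
  obtain ⟨c, hc, -⟩ := (pow_eq_pow_iff_of_coprime (Nat.coprime_div_gcd_div_gcd hg)).1 hyz
  refine ⟨c, ?_⟩
  rw [hy, hc, ← pow_mul, Nat.lcm, Nat.mul_div_assoc a (Nat.gcd_dvd_right a b), mul_comm]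

theorem exists_pow_finset_lcm {ι : Type*} {q : K} (hq : 0 < q) {s : Finset ι} {f : ι → ℕ}
    (h : ∀ i ∈ s, ∃ y, q = y ^ f i) : ∃ w, q = w ^ s.lcm f := by
  classical
  induction s using Finset.induction with
  | empty => exact ⟨q, by simp⟩
  | insert j s _ ih =>
    rw [Finset.lcm_insert, lcm_eq_nat_lcm]
    exact exists_pow_lcm hq (h j (s.mem_insert_self j))
      (ih fun i hi => h i (Finset.mem_insert_of_mem hi))

theorem exists_pos_mul_pow_eq_pow {q : K} (hq : 0 < q) {a L : ℕ}
    (h : ∃ w, q = w ^ Nat.gcd a L) : ∃ r, 0 < r ∧ ∃ y, q * r ^ L = y ^ a := by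
  obtain ⟨w, hw0, rfl⟩ := exists_pos_pow_eq_of_pos hq h
  -- Bézout: `gcd a L = a * gcdA a L + L * gcdB a L`.
  refine ⟨w ^ (-Nat.gcdB a L), zpow_pos hw0 _, w ^ Nat.gcdA a L, ?_⟩
  rw [← zpow_natCast, ← zpow_natCast, ← zpow_natCast, ← zpow_mul, ← zpow_mul, ← zpow_add₀ hw0.ne',
    Nat.gcd_eq_gcd_ab]
  ring_nf

theorem exists_pos_forall_mul_eq_pow {ι : Type*} (s : Finset ι) {n : ι → ℕ}
    (hn : ∀ i ∈ s, n i ≠ 0) {t : ι → K} (ht : ∀ i ∈ s, 0 < t i)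
    (hpair : ∀ i ∈ s, ∀ j ∈ s, i ≠ j → ∃ y, t i / t j = y ^ Nat.gcd (n i) (n j)) :
    ∃ x, 0 < x ∧ ∀ i ∈ s, ∃ y, t i * x = y ^ n i := by
  classical
  induction s using Finset.induction with
  | empty => exact ⟨1, one_pos, by simp⟩
  | insert j s hj ih =>
    obtain ⟨x, hx, hsol⟩ := ih (fun i hi => hn i (mem_insert_of_mem hi))
      (fun i hi => ht i (mem_insert_of_mem hi))
      (fun i hi i' hi' => hpair i (mem_insert_of_mem hi) i' (mem_insert_of_mem hi'))
    have hq : 0 < t j * x := mul_pos (ht j (mem_insert_self j s)) hx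
    have hq_pow : ∀ i ∈ s, ∃ y, t j * x = y ^ Nat.gcd (n j) (n i) := by
      intro i hi
      obtain ⟨y, hy⟩ := hpair j (mem_insert_self j s) i (mem_insert_of_mem hi)
        (ne_of_mem_of_not_mem hi hj).symm
      obtain ⟨z, hz⟩ := exists_pow_of_dvd (Nat.gcd_dvd_right (n j) (n i)) (hsol i hi)
      refine ⟨y * z, ?_⟩
      rw [mul_pow, ← hy, ← hz, ← mul_assoc, div_mul_cancel₀ _ (ht i (mem_insert_of_mem hi)).ne']
    obtain ⟨r, hr, y, hy⟩ := exists_pos_mul_pow_eq_pow hq <|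
      exists_pow_of_dvd (Nat.gcd_finset_lcm_dvd (hn j (mem_insert_self j s))
        fun i hi => hn i (mem_insert_of_mem hi)) (exists_pow_finset_lcm hq hq_pow)
    refine ⟨x * r ^ s.lcm n, by positivity, fun i hi => ?_⟩
    rcases mem_insert.1 hi with rfl | hi
    · exact ⟨y, by rw [← mul_assoc, hy]⟩
    · obtain ⟨z, hz⟩ := hsol i hi
      refine ⟨z * r ^ (s.lcm n / n i), ?_⟩
      rw [← mul_assoc, hz, mul_pow, ← pow_mul, Nat.div_mul_cancel (dvd_lcm hi)]

end LinearOrderedField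

theorem stmt16 : ∀ (k : ℕ) (n : Fin k → ℕ), (∀ m, 0 < n m) →
    ∀ t : Fin k → ℚ, (∀ m, 0 < t m) →
    ((∃ x : ℚ, 0 < x ∧ ∀ m, ∃ y : ℚ, t m * x = y ^ (n m)) ↔
      ∀ κ lam : Fin k, κ ≠ lam → ∃ y : ℚ, t κ / t lam = y ^ (Nat.gcd (n κ) (n lam))) := by
  intro k n hn t ht
  constructor
  · rintro ⟨x, hx, hsol⟩ κ lam -
    obtain ⟨y, hy⟩ := hsol κ
    obtain ⟨z, hz⟩ := hsol lam
    exact div_eq_pow_gcd_of_mul_eq_pow hx.ne' hy hz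
  · intro hpair
    simpa using exists_pos_forall_mul_eq_pow Finset.univ (fun i _ => (hn i).ne') (fun i _ => ht i)
      fun i _ j _ => hpair i j
end
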